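/- (Splitting claim) In Schlumprecht's space, for x, y ∈ c₀₀ and n ∈ ℕ with x < e_n < y, and nonnegative reals α, β: ‖x + α·e_n‖ + ‖β·e_n + y‖ ≤ max{ ‖x + (α+β)·e_n‖ + ‖y‖ , ‖x‖ + ‖(α+β)·e_n + y‖ }. -/

import Mathlib

open scoped Classical

noncomputable def f (l : ℕ) : ℝ := Real.logb 2 (l + 1)

/-- `E₁ < E₂ < ⋯` : the finite sets are successive. -/
def Succ {l : ℕ} (E : Fin l → Finset ℕ) : Prop :=
  ∀ i j : Fin l, i < j → ∀ a ∈ E i, ∀ b ∈ E j, a < b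

/-- Restriction `E(x)` of `x` to the finite set `E`. -/
noncomputable def restr (x : ℕ →₀ ℝ) (E : Finset ℕ) : ℕ →₀ ℝ :=
  x.filter (· ∈ E)

/-- The inductively defined norms `|·|_k`. -/
noncomputable def normK : ℕ → (ℕ →₀ ℝ) → ℝ
  | 0, x => ⨆ n, |x n|
  | k + 1, x => ⨆ l : ℕ, ⨆ E : Fin (l + 1) → Finset ℕ,
      if Succ E then (1 / f (l + 1)) * ∑ i, normK k (restr x (E i)) else 0

/-- The Schlumprecht norm `‖x‖ = sup_k |x|_k`. -/
noncomputable def S (x : ℕ →₀ ℝ) : ℝ := ⨆ k, normK k x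

noncomputable def L1 (z : ℕ →₀ ℝ) : ℝ := ∑ a ∈ z.support, |z a|

lemma L1_nonneg (z : ℕ →₀ ℝ) : 0 ≤ L1 z :=
  Finset.sum_nonneg fun _ _ => abs_nonneg _

lemma abs_le_L1 (z : ℕ →₀ ℝ) (m : ℕ) : |z m| ≤ L1 z := by
  by_cases h : z m = 0
  · simp [h, L1_nonneg]
  · exact Finset.single_le_sum (f := fun a => |z a|) (fun i _ => abs_nonneg _)
      (Finsupp.mem_support_iff.2 h)

lemma one_le_f (l : ℕ) : 1 ≤ f (l + 1) := by
  have : (1:ℝ) = Real.logb 2 2 := (Real.logb_self_eq_one (by norm_num)).symm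
  rw [f, this]
  apply Real.logb_le_logb_of_le (by norm_num) (by norm_num)
  push_cast; linarith [Nat.cast_nonneg (α := ℝ) l]

lemma f_pos (l : ℕ) : 0 < f (l + 1) := lt_of_lt_of_le one_pos (one_le_f l)

lemma L1_restr (z : ℕ →₀ ℝ) (s : Finset ℕ) :
    L1 (restr z s) = ∑ a ∈ z.support.filter (· ∈ s), |z a| := by
  rw [L1, restr, Finsupp.support_filter]
  apply Finset.sum_congr rfl
  intro a ha
  rw [Finsupp.filter_apply_pos]
  exact (Finset.mem_filter.1 ha).2

lemma sum_restr_L1 (z : ℕ →₀ ℝ) {l : ℕ} (E : Fin (l + 1) → Finset ℕ) (hE : Succ E) :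
    ∑ i, L1 (restr z (E i)) ≤ L1 z := by
  have hdisj : ((Finset.univ : Finset (Fin (l+1))) : Set (Fin (l+1))).PairwiseDisjoint
      (fun i => z.support.filter (· ∈ E i)) := by
    intro i _ j _ hij
    simp only [Function.onFun]
    rw [Finset.disjoint_left]
    intro a hai haj
    have h1 := (Finset.mem_filter.1 hai).2
    have h2 := (Finset.mem_filter.1 haj).2
    rcases lt_or_gt_of_ne hij with h | h
    · exact absurd (hE i j h a h1 a h2) (lt_irrefl a)
    · exact absurd (hE j i h a h2 a h1) (lt_irrefl a)
  calc ∑ i, L1 (restr z (E i))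
      = ∑ a ∈ Finset.univ.biUnion (fun i => z.support.filter (· ∈ E i)), |z a| := by
        simp_rw [L1_restr]
        exact (Finset.sum_biUnion hdisj).symm
    _ ≤ ∑ a ∈ z.support, |z a| := by
        apply Finset.sum_le_sum_of_subset_of_nonneg
        · intro a ha
          obtain ⟨i, _, hai⟩ := Finset.mem_biUnion.1 ha
          exact (Finset.mem_filter.1 hai).1
        · intro _ _ _; exact abs_nonneg _
    _ = L1 z := rfl

lemma normK_nonneg : ∀ k z, 0 ≤ normK k z := by
  intro k
  induction k with
  | zero => intro z; exact Real.iSup_nonneg fun n => abs_nonneg _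
  | succ k ih =>
    intro z
    apply Real.iSup_nonneg
    intro l
    apply Real.iSup_nonneg
    intro E
    split_ifs with hE
    · apply mul_nonneg (div_nonneg zero_le_one (f_pos l).le)
      exact Finset.sum_nonneg fun i _ => ih _
    · exact le_refl 0

lemma normK_le_L1 : ∀ k z, normK k z ≤ L1 z := by
  intro k
  induction k with
  | zero => intro z; exact Real.iSup_le (abs_le_L1 z) (L1_nonneg z)
  | succ k ih =>
    intro z
    apply Real.iSup_le _ (L1_nonneg z)
    intro l
    apply Real.iSup_le _ (L1_nonneg z)
    intro E
    split_ifs with hE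
    · have h1 : ∑ i, normK k (restr z (E i)) ≤ L1 z :=
        le_trans (Finset.sum_le_sum fun i _ => ih (restr z (E i))) (sum_restr_L1 z E hE)
      have h2 : (1 : ℝ) / f (l + 1) ≤ 1 := by
        rw [div_le_one (f_pos l)]; exact one_le_f l
      calc (1 / f (l + 1)) * ∑ i, normK k (restr z (E i))
          ≤ 1 * L1 z :=
            mul_le_mul h2 h1 (Finset.sum_nonneg fun i _ => normK_nonneg k _) zero_le_one
        _ = L1 z := one_mul _
    · exact L1_nonneg z

lemma ifterm_le_L1 (k : ℕ) (z : ℕ →₀ ℝ) (l : ℕ) (E : Fin (l + 1) → Finset ℕ) :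
    (if Succ E then (1 / f (l + 1)) * ∑ i, normK k (restr z (E i)) else 0) ≤ L1 z := by
  split_ifs with hE
  · have h1 : ∑ i, normK k (restr z (E i)) ≤ L1 z :=
      le_trans (Finset.sum_le_sum fun i _ => normK_le_L1 k (restr z (E i)))
        (sum_restr_L1 z E hE)
    have h2 : (1 : ℝ) / f (l + 1) ≤ 1 := by
      rw [div_le_one (f_pos l)]; exact one_le_f l
    calc (1 / f (l + 1)) * ∑ i, normK k (restr z (E i))
        ≤ 1 * L1 z :=
          mul_le_mul h2 h1 (Finset.sum_nonneg fun i _ => normK_nonneg k _) zero_le_one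
      _ = L1 z := one_mul _
  · exact L1_nonneg z

lemma bdd_inner (k : ℕ) (z : ℕ →₀ ℝ) (l : ℕ) :
    BddAbove (Set.range fun E : Fin (l + 1) → Finset ℕ =>
      if Succ E then (1 / f (l + 1)) * ∑ i, normK k (restr z (E i)) else 0) :=
  ⟨L1 z, by rintro _ ⟨E, rfl⟩; exact ifterm_le_L1 k z l E⟩

lemma bdd_outer (k : ℕ) (z : ℕ →₀ ℝ) :
    BddAbove (Set.range fun l : ℕ => ⨆ E : Fin (l + 1) → Finset ℕ,
      if Succ E then (1 / f (l + 1)) * ∑ i, normK k (restr z (E i)) else 0) :=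
  ⟨L1 z, by
    rintro _ ⟨l, rfl⟩
    exact Real.iSup_le (fun E => ifterm_le_L1 k z l E) (L1_nonneg z)⟩

lemma le_normK_succ (k : ℕ) (z : ℕ →₀ ℝ) (l : ℕ) (E : Fin (l + 1) → Finset ℕ)
    (hE : Succ E) :
    (1 / f (l + 1)) * ∑ i, normK k (restr z (E i)) ≤ normK (k + 1) z := by
  rw [normK]
  calc (1 / f (l + 1)) * ∑ i, normK k (restr z (E i))
      = (if Succ E then (1 / f (l + 1)) * ∑ i, normK k (restr z (E i)) else 0) :=
        (if_pos hE).symm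
    _ ≤ ⨆ E : Fin (l + 1) → Finset ℕ,
          if Succ E then (1 / f (l + 1)) * ∑ i, normK k (restr z (E i)) else 0 :=
        le_ciSup (bdd_inner k z l) E
    _ ≤ _ := le_ciSup (bdd_outer k z) l

lemma bdd_abs (z : ℕ →₀ ℝ) : BddAbove (Set.range fun m => |z m|) :=
  ⟨L1 z, by rintro _ ⟨m, rfl⟩; exact abs_le_L1 z m⟩

lemma restr_comb (a b : ℝ) (u v : ℕ →₀ ℝ) (s : Finset ℕ) :
    restr (a • u + b • v) s = a • restr u s + b • restr v s := by
  ext m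
  simp only [restr, Finsupp.filter_apply, Finsupp.add_apply, Finsupp.smul_apply,
    smul_eq_mul]
  split_ifs <;> simp

lemma normK_comb : ∀ k, ∀ a b : ℝ, 0 ≤ a → 0 ≤ b → ∀ u v : ℕ →₀ ℝ,
    normK k (a • u + b • v) ≤ a * normK k u + b * normK k v := by
  intro k
  induction k with
  | zero =>
    intro a b ha hb u v
    rw [normK]
    apply Real.iSup_le _ (by
      have := normK_nonneg 0 u; have := normK_nonneg 0 v; positivity)
    intro m
    have h1 : |(a • u + b • v) m| ≤ a * |u m| + b * |v m| := by
      simp only [Finsupp.add_apply, Finsupp.smul_apply, smul_eq_mul]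
      calc |a * u m + b * v m| ≤ |a * u m| + |b * v m| := abs_add_le _ _
        _ = a * |u m| + b * |v m| := by
            rw [abs_mul, abs_mul, abs_of_nonneg ha, abs_of_nonneg hb]
    refine le_trans h1 (add_le_add ?_ ?_)
    · exact mul_le_mul_of_nonneg_left
        (le_trans (le_ciSup (bdd_abs u) m) (le_of_eq (by rw [normK]))) ha
    · exact mul_le_mul_of_nonneg_left
        (le_trans (le_ciSup (bdd_abs v) m) (le_of_eq (by rw [normK]))) hb
  | succ k ih =>
    intro a b ha hb u v
    have hR : 0 ≤ a * normK (k + 1) u + b * normK (k + 1) v := by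
      have := normK_nonneg (k + 1) u; have := normK_nonneg (k + 1) v; positivity
    rw [normK]
    apply Real.iSup_le _ hR
    intro l
    apply Real.iSup_le _ hR
    intro E
    split_ifs with hE
    · have hf : (0:ℝ) ≤ 1 / f (l + 1) := div_nonneg zero_le_one (f_pos l).le
      calc (1 / f (l + 1)) * ∑ i, normK k (restr (a • u + b • v) (E i))
          ≤ (1 / f (l + 1)) * ∑ i, (a * normK k (restr u (E i)) +
              b * normK k (restr v (E i))) := by
            apply mul_le_mul_of_nonneg_left _ hf
            apply Finset.sum_le_sum
            intro i _
            rw [restr_comb]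
            exact ih a b ha hb _ _
        _ = a * ((1 / f (l + 1)) * ∑ i, normK k (restr u (E i))) +
            b * ((1 / f (l + 1)) * ∑ i, normK k (restr v (E i))) := by
            rw [Finset.sum_add_distrib, ← Finset.mul_sum, ← Finset.mul_sum]; ring
        _ ≤ a * normK (k + 1) u + b * normK (k + 1) v :=
            add_le_add
              (mul_le_mul_of_nonneg_left (le_normK_succ k u l E hE) ha)
              (mul_le_mul_of_nonneg_left (le_normK_succ k v l E hE) hb)
    · exact hR

lemma bdd_S (z : ℕ →₀ ℝ) : BddAbove (Set.range fun k => normK k z) :=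
  ⟨L1 z, by rintro _ ⟨k, rfl⟩; exact normK_le_L1 k z⟩

lemma normK_le_S (k : ℕ) (z : ℕ →₀ ℝ) : normK k z ≤ S z :=
  le_ciSup (bdd_S z) k

lemma S_nonneg (z : ℕ →₀ ℝ) : 0 ≤ S z :=
  Real.iSup_nonneg fun k => normK_nonneg k z

lemma S_comb (a b : ℝ) (ha : 0 ≤ a) (hb : 0 ≤ b) (u v : ℕ →₀ ℝ) :
    S (a • u + b • v) ≤ a * S u + b * S v := by
  apply Real.iSup_le _ (by have := S_nonneg u; have := S_nonneg v; positivity)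
  intro k
  exact le_trans (normK_comb k a b ha hb u v)
    (add_le_add (mul_le_mul_of_nonneg_left (normK_le_S k u) ha)
      (mul_le_mul_of_nonneg_left (normK_le_S k v) hb))

theorem stmt17 (x y : ℕ →₀ ℝ) (n : ℕ)
    (hx : ∀ a ∈ x.support, a < n) (hy : ∀ b ∈ y.support, n < b)
    (α β : ℝ) (hα : 0 ≤ α) (hβ : 0 ≤ β) :
    S (x + α • Finsupp.single n 1) + S (β • Finsupp.single n 1 + y) ≤
      max (S (x + (α + β) • Finsupp.single n 1) + S y)
          (S x + S ((α + β) • Finsupp.single n 1 + y)) := by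
  set e : ℕ →₀ ℝ := Finsupp.single n 1 with he
  rcases eq_or_lt_of_le (by linarith : (0:ℝ) ≤ α + β) with hc | hc
  · have hα0 : α = 0 := by linarith
    have hβ0 : β = 0 := by linarith
    simp only [hα0, hβ0, zero_add, zero_smul, add_zero]
    exact le_max_left _ _
  · set c : ℝ := α + β with hcdef
    set lam : ℝ := α / c with hlam
    set mu : ℝ := β / c with hmu
    have hlam0 : 0 ≤ lam := div_nonneg hα hc.le
    have hmu0 : 0 ≤ mu := div_nonneg hβ hc.le
    have hsum : lam + mu = 1 := by
      rw [hlam, hmu, ← add_div, div_self hc.ne']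
    have hlc : lam * c = α := div_mul_cancel₀ α hc.ne'
    have hmc : mu * c = β := div_mul_cancel₀ β hc.ne'
    have h1 : x + α • e = lam • (x + c • e) + mu • x := by
      have : lam • (x + c • e) + mu • x = (lam + mu) • x + (lam * c) • e := by module
      rw [this, hsum, one_smul, hlc]
    have h2 : β • e + y = mu • (c • e + y) + lam • y := by
      have : mu • (c • e + y) + lam • y = (mu * c) • e + (mu + lam) • y := by module
      rw [this, hmc, add_comm mu lam, hsum, one_smul]
    have A : S (x + α • e) ≤ lam * S (x + c • e) + mu * S x := by
      rw [h1]; exact S_comb lam mu hlam0 hmu0 _ _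
    have B : S (β • e + y) ≤ mu * S (c • e + y) + lam * S y := by
      rw [h2]; exact S_comb mu lam hmu0 hlam0 _ _
    set M := max (S (x + c • e) + S y) (S x + S (c • e + y)) with hM
    calc S (x + α • e) + S (β • e + y)
        ≤ (lam * S (x + c • e) + mu * S x) + (mu * S (c • e + y) + lam * S y) :=
          add_le_add A B
      _ = lam * (S (x + c • e) + S y) + mu * (S x + S (c • e + y)) := by ring
      _ ≤ lam * M + mu * M :=
          add_le_add (mul_le_mul_of_nonneg_left (le_max_left _ _) hlam0)
            (mul_le_mul_of_nonneg_left (le_max_right _ _) hmu0)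
      _ = M := by rw [← add_mul, hsum, one_mul]
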